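/- For every natural number n ≥ 5, the prime-counting function satisfies π(n-1) = 2 + Σ_{k=5}^{n-1} sin((k-1)!·π/k)/sin(π/k). -/

import Mathlib

/-!
By Wilson's theorem a prime `k` divides `(k - 1)! + 1`, and this number is odd, so
`(k - 1)! ≡ k - 1 (mod 2k)` and `sin ((k - 1)! π / k) = sin (π - π / k) = sin (π / k)`.
A composite `k > 4` divides `(k - 1)!`, so the sine vanishes. Hence for `k ≥ 5` the summand is
the indicator of `k` being prime, and adding the two primes `2, 3` below `5` gives `π (n - 1)`.
-/

open Real Finset Nat

namespace Nat

theorem mul_dvd_factorial_of_lt {a b : ℕ} (ha : 0 < a) (hab : a < b) : a * b ∣ b ! := by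
  rw [← mul_factorial_pred (by omega : b ≠ 0), mul_comm b]
  exact mul_dvd_mul_right (dvd_factorial ha (by omega)) b

theorem dvd_factorial_sub_one_of_not_prime {k : ℕ} (hk : 4 < k) (hk' : ¬ k.Prime) :
    k ∣ (k - 1)! := by
  obtain ⟨a, ⟨b, rfl⟩, ha, hab⟩ := exists_dvd_of_not_prime2 (by omega) hk'
  have hb : 2 ≤ b := by
    by_contra! hb
    interval_cases b <;> omega
  have hb' : b < a * b := lt_mul_of_one_lt_left (by omega) (by omega)
  have ha' : a < a * b := lt_mul_of_one_lt_right (by omega) (by omega)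
  rcases lt_trichotomy a b with h | rfl | h
  · exact (mul_dvd_factorial_of_lt (by omega) h).trans (factorial_dvd_factorial (by omega))
  · have ha3 : 3 ≤ a := by nlinarith
    have h2a : 2 * a ≤ a * a - 1 := by
      have : 3 * a ≤ a * a := Nat.mul_le_mul_right a ha3
      omega
    calc a * a ∣ a * (2 * a) := mul_dvd_mul_left a (dvd_mul_left a 2)
      _ ∣ (2 * a)! := mul_dvd_factorial_of_lt (by omega) (by omega)
      _ ∣ (a * a - 1)! := factorial_dvd_factorial h2a
  · have hdvd := mul_dvd_factorial_of_lt (by omega) h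
    rw [mul_comm] at hdvd
    exact hdvd.trans (factorial_dvd_factorial (by omega))

theorem primeCounting_eq_two_add_card_filter_Icc {m : ℕ} (hm : 4 ≤ m) :
    primeCounting m = 2 + #{k ∈ Icc 5 m | k.Prime} := by
  rw [← primesLE_card_eq_primeCounting, primesLE_eq_filter_range, card_filter, card_filter,
    ← sum_range_add_sum_Ico _ (by omega : 5 ≤ m + 1), Ico_add_one_right_eq_Icc]
  congr 1

end Nat

theorem Real.sin_natCast_mul_pi_div_of_dvd {m k : ℕ} (h : k ∣ m) : sin (m * π / k) = 0 := by
  obtain ⟨c, rfl⟩ := h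
  rcases eq_or_ne k 0 with rfl | hk
  · simp
  · have harg : (k * c : ℕ) * π / k = c * π := by
      push_cast; field_simp
    rw [harg, sin_nat_mul_pi]

theorem Real.sin_natCast_mul_pi_div_of_dvd_add_one {m k : ℕ} (hodd : Odd (m + 1))
    (h : k ∣ m + 1) : sin (m * π / k) = sin (π / k) := by
  obtain ⟨c, hc⟩ := h
  obtain ⟨d, rfl⟩ := (odd_mul.mp (hc ▸ hodd)).2
  have hk : (k : ℝ) ≠ 0 := by rintro h; simp_all
  have harg : m * π / k = π - π / k + d * (2 * π) := by
    have : (m : ℝ) = k * (2 * d + 1) - 1 := by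
      rw [eq_sub_iff_add_eq]; exact_mod_cast hc
    rw [this]; field_simp; ring
  rw [harg, sin_add_nat_mul_two_pi, sin_pi_sub]

theorem sin_factorial_mul_pi_div_div_sin_pi_div {k : ℕ} (hk : 4 < k) :
    sin ((k - 1)! * π / k) / sin (π / k) = if k.Prime then 1 else 0 := by
  split_ifs with hp
  · have hsin : sin (π / k) ≠ 0 :=
      (sin_pos_of_pos_of_lt_pi (by positivity)
        (div_lt_self pi_pos (by exact_mod_cast (by omega : 1 < k)))).ne'
    have hwilson : k ∣ (k - 1)! + 1 := by
      have := Fact.mk hp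
      rw [← ZMod.natCast_eq_zero_iff]
      push_cast
      rw [ZMod.wilsons_lemma, neg_add_cancel]
    have hodd : Odd ((k - 1)! + 1) :=
      (even_iff_two_dvd.mpr (dvd_factorial two_pos (by omega))).add_one
    rw [Real.sin_natCast_mul_pi_div_of_dvd_add_one hodd hwilson, div_self hsin]
  · rw [Real.sin_natCast_mul_pi_div_of_dvd (dvd_factorial_sub_one_of_not_prime hk hp), zero_div]

theorem barrett_counts_primes (n : ℕ) (hn : 5 ≤ n) :
    ((Nat.primeCounting (n - 1) : ℕ) : ℝ)
      = 2 + ∑ k ∈ Finset.Icc 5 (n - 1),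
          Real.sin (((Nat.factorial (k - 1)) : ℝ) * Real.pi / k) / Real.sin (Real.pi / k) := by
  rw [sum_congr rfl fun k hk ↦ sin_factorial_mul_pi_div_div_sin_pi_div (mem_Icc.mp hk).1,
    sum_boole, primeCounting_eq_two_add_card_filter_Icc (by omega)]
  push_cast
  rfl
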